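/- arXiv:1706.03570 — 7 statements merged into one kernel-verified Lean document; each statement's English description precedes it below -/
import Mathlib

section
/- Let a, b be points of the open unit disk D of the complex plane and let L > 0 be such that |a − b| ≤ L · min(1 − |a|, 1 − |b|). Then the pseudo-hyperbolic distance satisfies ρ(a, b) ≤ L/√(L² + 1); in particular ρ(a, b) < 1. -/
/-!
With `d = |a - b|` and `P = (1 - |a|²)(1 - |b|²)`, the identity `|1 - ā b|² = d² + P` gives
`ρ(a, b)² = d² / (d² + P)`. Since `min (1 - |a|) (1 - |b|)² ≤ P`, the hypothesis yields `d² ≤ L² P`,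
which is exactly `ρ(a, b)² ≤ L² / (L² + 1)`.
-/

open ComplexConjugate

theorem Complex.sq_norm_one_sub_conj_mul (a b : ℂ) :
    ‖1 - conj a * b‖ ^ 2 = ‖a - b‖ ^ 2 + (1 - ‖a‖ ^ 2) * (1 - ‖b‖ ^ 2) := by
  simp only [Complex.sq_norm, normSq_apply, sub_re, sub_im, mul_re, mul_im, one_re, one_im, conj_re,
    conj_im]
  ring

theorem sq_min_one_sub_le_mul_one_sub_sq {x y : ℝ} (hx₀ : 0 ≤ x) (hx₁ : x ≤ 1)
    (hy₀ : 0 ≤ y) (hy₁ : y ≤ 1) :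
    min (1 - x) (1 - y) ^ 2 ≤ (1 - x ^ 2) * (1 - y ^ 2) := by
  have hx : min (1 - x) (1 - y) ≤ 1 - x ^ 2 := by nlinarith [min_le_left (1 - x) (1 - y)]
  have hy : min (1 - x) (1 - y) ≤ 1 - y ^ 2 := by nlinarith [min_le_right (1 - x) (1 - y)]
  rw [sq]
  exact mul_le_mul hx hy (le_min (by linarith) (by linarith)) (by nlinarith)

theorem div_le_div_sqrt_sq_add_one {d D L : ℝ} (hD : 0 < D) (hL : 0 ≤ L)
    (h : d ^ 2 ≤ L ^ 2 * (D ^ 2 - d ^ 2)) : d / D ≤ L / √(L ^ 2 + 1) := by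
  rw [div_le_div_iff₀ hD (by positivity)]
  refine le_of_sq_le_sq ?_ (by positivity)
  rw [mul_pow, mul_pow, Real.sq_sqrt (by positivity)]
  linarith

theorem div_sqrt_sq_add_one_lt_one (L : ℝ) : L / √(L ^ 2 + 1) < 1 := by
  rw [div_lt_one (by positivity)]
  exact Real.lt_sqrt_of_sq_lt (lt_add_one _)

/-- If `a, b` are in the open unit disk and
`|a - b| ≤ L * min (1 - |a|) (1 - |b|)` with `L > 0`, then the pseudo-hyperbolic
distance `ρ(a,b) = |(a - b)/(1 - conj a * b)|` satisfies
`ρ(a,b) ≤ L / √(L² + 1)`; in particular `ρ(a,b) < 1`. -/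
theorem pseudo_hyperbolic_distance_bound (a b : ℂ)
    (ha : ‖a‖ < 1) (hb : ‖b‖ < 1)
    (L : ℝ) (hL : 0 < L)
    (h : ‖a - b‖ ≤ L * min (1 - ‖a‖) (1 - ‖b‖)) :
    ‖(a - b) / (1 - (starRingEnd ℂ) a * b)‖ ≤ L / Real.sqrt (L ^ 2 + 1) ∧
      ‖(a - b) / (1 - (starRingEnd ℂ) a * b)‖ < 1 := by
  have hP : 0 < (1 - ‖a‖ ^ 2) * (1 - ‖b‖ ^ 2) :=
    mul_pos (sub_pos.2 (pow_lt_one₀ (norm_nonneg a) ha two_ne_zero))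
      (sub_pos.2 (pow_lt_one₀ (norm_nonneg b) hb two_ne_zero))
  have hdist : ‖a - b‖ ^ 2 ≤ L ^ 2 * ((1 - ‖a‖ ^ 2) * (1 - ‖b‖ ^ 2)) :=
    calc ‖a - b‖ ^ 2 ≤ L ^ 2 * min (1 - ‖a‖) (1 - ‖b‖) ^ 2 := by
          rw [← mul_pow]; exact pow_le_pow_left₀ (norm_nonneg _) h 2
      _ ≤ L ^ 2 * ((1 - ‖a‖ ^ 2) * (1 - ‖b‖ ^ 2)) := by
          gcongr
          exact sq_min_one_sub_le_mul_one_sub_sq (norm_nonneg a) ha.le (norm_nonneg b) hb.le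
  have hD := Complex.sq_norm_one_sub_conj_mul a b
  have hbound : ‖(a - b) / (1 - conj a * b)‖ ≤ L / √(L ^ 2 + 1) := by
    rw [norm_div]
    refine div_le_div_sqrt_sq_add_one ?_ hL.le (by rw [hD]; linarith)
    exact lt_of_pow_lt_pow_left₀ 2 (norm_nonneg _) (by rw [zero_pow two_ne_zero, hD]; positivity)
  exact ⟨hbound, hbound.trans_lt (div_sqrt_sq_add_one_lt_one L)⟩
end

section
/- Let θ ∈ (0, 1) and set δ = cos(θπ/2). For every complex number z with |z| ≤ 1 and Re z ≥ 0, one has 1 − |λ_θ(z)|² ≥ (δ/2) · |1 − z|^θ. -/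
open Complex ComplexConjugate

/-! Writing `a = (1 + z) ^ θ` and `b = (1 - z) ^ θ`, one has
`1 - |λ_θ(z)|² = 4 Re (a b̄) / |a + b|²`. Since `(1 + z)(1 - z̄)` has real part `1 - |z|² ≥ 0`,
the arguments of `1 + z` and `1 - z` differ by at most `π/2`, so those of `a` and `b` differ by at
most `θπ/2` and `Re (a b̄) ≥ δ |a| |b|`. Finally `|b| ≤ |a| ≤ 2` gives `|a + b|² ≤ 4 |a|² ≤ 8 |a|`. -/

lemma one_sub_norm_sub_div_add_sq {a b : ℂ} (h : a + b ≠ 0) :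
    1 - ‖(a - b) / (a + b)‖ ^ 2 = 4 * (a * conj b).re / ‖a + b‖ ^ 2 := by
  rw [norm_div, div_pow, one_sub_div (pow_ne_zero _ (norm_ne_zero_iff.2 h))]
  congr 1
  simp only [Complex.sq_norm, normSq_add, normSq_sub]
  ring

lemma le_one_sub_norm_sub_div_add_sq {a b : ℂ} {c : ℝ} (hc : 0 ≤ c) (ha : ‖a‖ ≤ 2)
    (hba : ‖b‖ ≤ ‖a‖) (ha₀ : a ≠ 0) (hre : c * (‖a‖ * ‖b‖) ≤ (a * conj b).re) :
    c / 2 * ‖b‖ ≤ 1 - ‖(a - b) / (a + b)‖ ^ 2 := by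
  have hab : a + b ≠ 0 := by
    intro h
    obtain rfl : b = -a := eq_neg_of_add_eq_zero_right h
    have : (a * conj (-a)).re = -‖a‖ ^ 2 := by
      rw [map_neg, mul_neg, neg_re, mul_conj, Complex.sq_norm, ofReal_re]
    rw [this, norm_neg] at hre
    exact ha₀ (norm_eq_zero.1 (by nlinarith [norm_nonneg a]))
  have hsum : ‖a + b‖ ≤ 2 * ‖a‖ := (norm_add_le a b).trans (by linarith)
  have hsq : ‖a + b‖ ^ 2 ≤ 8 * ‖a‖ := by nlinarith [norm_nonneg (a + b), norm_nonneg a]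
  rw [one_sub_norm_sub_div_add_sq hab, le_div_iff₀ (by positivity)]
  nlinarith [norm_nonneg a, norm_nonneg b, mul_nonneg hc (norm_nonneg b)]

lemma re_cpow_mul_conj_cpow (x y : ℂ) (θ : ℝ) :
    (x ^ (θ : ℂ) * conj (y ^ (θ : ℂ))).re = ‖x‖ ^ θ * ‖y‖ ^ θ * Real.cos ((arg x - arg y) * θ) := by
  simp only [mul_re, conj_re, conj_im, cpow_ofReal_re, cpow_ofReal_im, sub_mul, Real.cos_sub]
  ring

lemma abs_arg_sub_arg_le_pi_div_two {x y : ℂ} (hx : 0 ≤ x.re) (hy : 0 ≤ y.re)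
    (hxy : 0 ≤ (x * conj y).re) : |arg x - arg y| ≤ Real.pi / 2 := by
  have hx' := abs_arg_le_pi_div_two_iff.2 hx
  have hy' := abs_arg_le_pi_div_two_iff.2 hy
  rcases eq_or_ne x 0 with rfl | hx₀
  · simpa using hy'
  rcases eq_or_ne y 0 with rfl | hy₀
  · simpa using hx'
  have hcos : 0 ≤ Real.cos (arg x - arg y) := by
    have h := re_cpow_mul_conj_cpow x y 1
    simp only [ofReal_one, cpow_one, Real.rpow_one, mul_one] at h
    rw [h] at hxy
    exact nonneg_of_mul_nonneg_right hxy (by positivity)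
  by_contra! hlt
  have hle : |arg x - arg y| ≤ Real.pi := (abs_sub _ _).trans (by linarith)
  have := Real.cos_neg_of_pi_div_two_lt_of_lt hlt (by linarith [Real.pi_pos])
  rw [Real.cos_abs] at this
  linarith

lemma re_one_add_mul_conj_one_sub (z : ℂ) : ((1 + z) * conj (1 - z)).re = 1 - ‖z‖ ^ 2 := by
  simp only [mul_re, add_re, add_im, conj_re, conj_im, sub_re, sub_im, one_re, one_im,
    Complex.sq_norm, normSq_apply]
  ring

lemma norm_one_sub_le_norm_one_add {z : ℂ} (hz : 0 ≤ z.re) : ‖1 - z‖ ≤ ‖1 + z‖ := by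
  rw [← sq_le_sq₀ (norm_nonneg _) (norm_nonneg _), Complex.sq_norm, Complex.sq_norm,
    normSq_apply, normSq_apply]
  simp only [add_re, add_im, sub_re, sub_im, one_re, one_im]
  nlinarith

lemma cos_mul_pi_div_two_le_cos_mul {θ φ : ℝ} (hθ₀ : 0 ≤ θ) (hθ₂ : θ ≤ 2)
    (hφ : |φ| ≤ Real.pi / 2) : Real.cos (θ * Real.pi / 2) ≤ Real.cos (φ * θ) := by
  rw [← Real.cos_abs (φ * θ)]
  refine Real.cos_le_cos_of_nonneg_of_le_pi (abs_nonneg _) (by nlinarith [Real.pi_pos]) ?_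
  rw [abs_mul, abs_of_nonneg hθ₀]
  nlinarith

/-- The lens map `λ_θ`, defined using principal branches of complex powers. -/
noncomputable def lensMap (θ : ℝ) (z : ℂ) : ℂ :=
  ((1 + z) ^ (θ : ℂ) - (1 - z) ^ (θ : ℂ)) / ((1 + z) ^ (θ : ℂ) + (1 - z) ^ (θ : ℂ))

/-- For `θ ∈ (0,1)`, `δ = cos(θπ/2)`, and `z` with `|z| ≤ 1`, `Re z ≥ 0`:
`1 - |λ_θ(z)|² ≥ (δ/2) |1 - z|^θ`. -/
theorem one_sub_sq_abs_lensMap_ge (θ : ℝ) (hθ : θ ∈ Set.Ioo (0 : ℝ) 1)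
    (δ : ℝ) (hδ : δ = Real.cos (θ * Real.pi / 2))
    (z : ℂ) (hz : ‖z‖ ≤ 1) (hre : 0 ≤ z.re) :
    1 - ‖lensMap θ z‖ ^ 2 ≥ δ / 2 * ‖1 - z‖ ^ θ := by
  obtain ⟨hθ₀, hθ₁⟩ := hθ
  have hδ₀ : 0 ≤ δ :=
    hδ ▸ Real.cos_nonneg_of_mem_Icc ⟨by nlinarith [Real.pi_pos], by nlinarith [Real.pi_pos]⟩
  have hre₁ : z.re ≤ 1 := (re_le_norm z).trans hz
  have hφ : |arg (1 + z) - arg (1 - z)| ≤ Real.pi / 2 :=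
    abs_arg_sub_arg_le_pi_div_two (by rw [add_re, one_re]; linarith)
      (by rw [sub_re, one_re]; linarith)
      (by rw [re_one_add_mul_conj_one_sub]; nlinarith [norm_nonneg z])
  have h₁ : 1 + z ≠ 0 := fun h => by
    have := congrArg re h
    simp only [add_re, one_re, zero_re] at this
    linarith
  have hle₂ : ‖1 + z‖ ≤ 2 := (norm_add_le _ _).trans (by rw [norm_one]; linarith)
  rw [lensMap, ge_iff_le, ← norm_cpow_real]
  refine le_one_sub_norm_sub_div_add_sq hδ₀ ?_ ?_ ?_ ?_
  · calc ‖(1 + z) ^ (θ : ℂ)‖ = ‖1 + z‖ ^ θ := norm_cpow_real _ _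
      _ ≤ 2 ^ θ := Real.rpow_le_rpow (norm_nonneg _) hle₂ hθ₀.le
      _ ≤ 2 := by simpa using Real.rpow_le_rpow_of_exponent_le one_le_two hθ₁.le
  · simp only [norm_cpow_real]
    exact Real.rpow_le_rpow (norm_nonneg _) (norm_one_sub_le_norm_one_add hre) hθ₀.le
  · exact (cpow_ne_zero_iff_of_exponent_ne_zero (by exact_mod_cast hθ₀.ne')).2 h₁
  · rw [re_cpow_mul_conj_cpow, norm_cpow_real, norm_cpow_real, mul_comm δ]
    exact mul_le_mul_of_nonneg_left (hδ ▸ cos_mul_pi_div_two_le_cos_mul hθ₀.le (by linarith) hφ)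
      (by positivity)
end

section
/- Let θ ∈ (0, 1) and set δ = cos(θπ/2). For every complex number z with |z| ≤ 1, one has Re((1 − z)^θ + (1 + z)^θ) ≥ δ · (|1 − z|^θ + |1 + z|^θ), and moreover |1 − z|^θ + |1 + z|^θ ≥ 1; consequently |(1 − z)^θ + (1 + z)^θ| ≥ δ. -/
/-!
Both `1 - z` and `1 + z` lie in the closed right half-plane, so their arguments have absolute
value at most `π / 2`; hence `Re w^θ = |w|^θ cos (θ arg w) ≥ cos (θπ/2) |w|^θ` for each of them.
Since `|1 - z| + |1 + z| ≥ 2`, one of the two norms is at least `1`, which gives the lower bound `1`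
for the sum of their `θ`-th powers, and the bound on `|(1 - z)^θ + (1 + z)^θ|` follows from
`|·| ≥ Re`.
-/

open Real

namespace Complex

theorem cos_mul_pi_div_two_mul_le_re_cpow {θ : ℝ} (hθ₀ : 0 ≤ θ) (hθ₂ : θ ≤ 2) {w : ℂ}
    (hw : 0 ≤ w.re) : Real.cos (θ * π / 2) * ‖w‖ ^ θ ≤ (w ^ (θ : ℂ)).re := by
  rw [cpow_ofReal_re, mul_comm]
  refine mul_le_mul_of_nonneg_left ?_ (rpow_nonneg (norm_nonneg w) θ)
  have harg : |arg w| * θ ≤ π / 2 * θ :=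
    mul_le_mul_of_nonneg_right (abs_arg_le_pi_div_two_iff.mpr hw) hθ₀
  rw [← Real.cos_abs (arg w * θ), abs_mul, abs_of_nonneg hθ₀]
  exact Real.cos_le_cos_of_nonneg_of_le_pi (by positivity) (by nlinarith [pi_pos]) (by linarith)

theorem one_le_norm_one_sub_rpow_add_norm_one_add_rpow {θ : ℝ} (hθ : 0 ≤ θ) (z : ℂ) :
    1 ≤ ‖1 - z‖ ^ θ + ‖1 + z‖ ^ θ := by
  have htwo : 2 ≤ ‖1 - z‖ + ‖1 + z‖ := by
    simpa [sub_add_add_cancel, one_add_one_eq_two] using norm_add_le (1 - z) (1 + z)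
  rcases le_total 1 ‖1 - z‖ with h | h
  · linarith [one_le_rpow h hθ, rpow_nonneg (norm_nonneg (1 + z)) θ]
  · linarith [one_le_rpow (by linarith : 1 ≤ ‖1 + z‖) hθ, rpow_nonneg (norm_nonneg (1 - z)) θ]

end Complex

/-- For `θ ∈ (0,1)`, `δ = cos(θπ/2)`, and `|z| ≤ 1`:
`Re((1-z)^θ + (1+z)^θ) ≥ δ (|1-z|^θ + |1+z|^θ)`, `|1-z|^θ + |1+z|^θ ≥ 1`,
and consequently `|(1-z)^θ + (1+z)^θ| ≥ δ`. -/
theorem re_sum_cpow_ge (θ : ℝ) (hθ : θ ∈ Set.Ioo (0 : ℝ) 1)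
    (δ : ℝ) (hδ : δ = Real.cos (θ * Real.pi / 2))
    (z : ℂ) (hz : ‖z‖ ≤ 1) :
    ((1 - z) ^ (θ : ℂ) + (1 + z) ^ (θ : ℂ)).re ≥
        δ * (‖1 - z‖ ^ θ + ‖1 + z‖ ^ θ) ∧
      ‖1 - z‖ ^ θ + ‖1 + z‖ ^ θ ≥ 1 ∧
      ‖(1 - z) ^ (θ : ℂ) + (1 + z) ^ (θ : ℂ)‖ ≥ δ := by
  obtain ⟨hθ₀, hθ₁⟩ := hθ
  obtain ⟨hzre₁, hzre₂⟩ := abs_le.mp ((Complex.abs_re_le_norm z).trans hz)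
  have hre : δ * (‖1 - z‖ ^ θ + ‖1 + z‖ ^ θ) ≤ ((1 - z) ^ (θ : ℂ) + (1 + z) ^ (θ : ℂ)).re := by
    rw [hδ, Complex.add_re, mul_add]
    exact add_le_add
      (Complex.cos_mul_pi_div_two_mul_le_re_cpow hθ₀.le (by linarith)
        (by rw [Complex.sub_re, Complex.one_re]; linarith))
      (Complex.cos_mul_pi_div_two_mul_le_re_cpow hθ₀.le (by linarith)
        (by rw [Complex.add_re, Complex.one_re]; linarith))
  have hsum := Complex.one_le_norm_one_sub_rpow_add_norm_one_add_rpow hθ₀.le z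
  have hδ₀ : 0 ≤ δ := hδ ▸ cos_nonneg_of_mem_Icc ⟨by nlinarith [pi_pos], by nlinarith [pi_pos]⟩
  refine ⟨hre, hsum, ?_⟩
  calc δ ≤ δ * (‖1 - z‖ ^ θ + ‖1 + z‖ ^ θ) := le_mul_of_one_le_right hδ₀ hsum
    _ ≤ ((1 - z) ^ (θ : ℂ) + (1 + z) ^ (θ : ℂ)).re := hre
    _ ≤ ‖(1 - z) ^ (θ : ℂ) + (1 + z) ^ (θ : ℂ)‖ := Complex.re_le_norm _
end

section
/- Let θ ∈ (0, 1), δ = cos(θπ/2), and define φ = (1 + λ_θ)/2. Then for every z in the open unit disk D, |1 − φ(z)| = (1/2)|1 − λ_θ(z)| ≤ |1 − z|^θ / δ. -/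
/-!
Write `A = (1 + z)^θ` and `B = (1 - z)^θ`, so that `1 - λ_θ(z) = 2B / (A + B)` and
`|B| = |1 - z|^θ`. On the closed right half-plane `|arg w| ≤ π/2`, hence
`Re w^θ ≥ cos(θπ/2) |w|^θ`. Since `|1 + z| + |1 - z| ≥ 2`, one of `|1 ± z|` is at least `1`, so `Re (A + B) ≥ cos(θπ/2) = δ`,
and therefore `|1 - λ_θ(z)| ≤ 2 |1 - z|^θ / δ`.
-/

open Complex

lemma cos_mul_pi_div_two_mul_rpow_le_re_cpow {θ : ℝ} (hθ₀ : 0 ≤ θ) (hθ₂ : θ ≤ 2) {w : ℂ}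
    (hw : 0 ≤ w.re) : Real.cos (θ * Real.pi / 2) * ‖w‖ ^ θ ≤ (w ^ (θ : ℂ)).re := by
  have harg : |arg w| ≤ Real.pi / 2 := abs_arg_le_pi_div_two_iff.2 hw
  have hcos : Real.cos (θ * Real.pi / 2) ≤ Real.cos (arg w * θ) := by
    rw [← Real.cos_abs (arg w * θ), abs_mul, abs_of_nonneg hθ₀]
    apply Real.cos_le_cos_of_nonneg_of_le_pi (by positivity)
    · nlinarith [Real.pi_pos]
    · nlinarith
  rw [cpow_ofReal_re, mul_comm (‖w‖ ^ θ)]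
  exact mul_le_mul_of_nonneg_right hcos (by positivity)

lemma one_le_rpow_add_rpow_of_two_le_add {a b θ : ℝ} (ha : 0 ≤ a) (hb : 0 ≤ b) (hθ : 0 ≤ θ)
    (hab : 2 ≤ a + b) : 1 ≤ a ^ θ + b ^ θ := by
  rcases le_total 1 a with h | h
  · linarith [Real.one_le_rpow h hθ, Real.rpow_nonneg hb θ]
  · linarith [Real.one_le_rpow (show 1 ≤ b by linarith) hθ, Real.rpow_nonneg ha θ]

lemma cos_mul_pi_div_two_le_re_cpow_add_cpow {θ : ℝ} (hθ₀ : 0 ≤ θ) (hθ₁ : θ ≤ 1) {z : ℂ}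
    (hz : ‖z‖ ≤ 1) :
    Real.cos (θ * Real.pi / 2) ≤ ((1 + z) ^ (θ : ℂ) + (1 - z) ^ (θ : ℂ)).re := by
  have hre := abs_le.1 ((abs_re_le_norm z).trans hz)
  have hθ₂ : θ ≤ 2 := by linarith
  have hA := cos_mul_pi_div_two_mul_rpow_le_re_cpow hθ₀ hθ₂ (w := 1 + z)
    (by simp only [add_re, one_re]; linarith)
  have hB := cos_mul_pi_div_two_mul_rpow_le_re_cpow hθ₀ hθ₂ (w := 1 - z)
    (by simp only [sub_re, one_re]; linarith)
  have hsum : 2 ≤ ‖1 + z‖ + ‖1 - z‖ := by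
    simpa [show (1 + z) + (1 - z) = (2 : ℂ) by ring] using norm_add_le (1 + z) (1 - z)
  have hone := one_le_rpow_add_rpow_of_two_le_add (norm_nonneg _) (norm_nonneg _) hθ₀ hsum
  have hcos : 0 ≤ Real.cos (θ * Real.pi / 2) :=
    Real.cos_nonneg_of_mem_Icc ⟨by nlinarith [Real.pi_pos], by nlinarith [Real.pi_pos]⟩
  calc Real.cos (θ * Real.pi / 2)
      ≤ Real.cos (θ * Real.pi / 2) * (‖1 + z‖ ^ θ + ‖1 - z‖ ^ θ) :=
        le_mul_of_one_le_right hcos hone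
    _ ≤ _ := by rw [add_re, mul_add]; exact add_le_add hA hB

lemma one_sub_lensMap {θ : ℝ} {z : ℂ} (h : (1 + z) ^ (θ : ℂ) + (1 - z) ^ (θ : ℂ) ≠ 0) :
    1 - lensMap θ z = 2 * (1 - z) ^ (θ : ℂ) / ((1 + z) ^ (θ : ℂ) + (1 - z) ^ (θ : ℂ)) := by
  rw [lensMap]
  field_simp
  ring

lemma norm_one_sub_lensMap_le {θ : ℝ} (hθ₀ : 0 ≤ θ) (hθ₁ : θ < 1) {z : ℂ} (hz : ‖z‖ ≤ 1) :
    ‖1 - lensMap θ z‖ ≤ 2 * ‖1 - z‖ ^ θ / Real.cos (θ * Real.pi / 2) := by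
  have hδ : 0 < Real.cos (θ * Real.pi / 2) :=
    Real.cos_pos_of_mem_Ioo ⟨by nlinarith [Real.pi_pos], by nlinarith [Real.pi_pos]⟩
  have hre := cos_mul_pi_div_two_le_re_cpow_add_cpow hθ₀ hθ₁.le hz
  have hne : (1 + z) ^ (θ : ℂ) + (1 - z) ^ (θ : ℂ) ≠ 0 := by
    intro h
    rw [h, zero_re] at hre
    linarith
  rw [one_sub_lensMap hne, norm_div, norm_mul, norm_cpow_real, Complex.norm_two]
  exact div_le_div_of_nonneg_left (by positivity) hδ (hre.trans (re_le_norm _))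

/-- For `θ ∈ (0,1)`, `δ = cos(θπ/2)` and `φ = (1 + λ_θ)/2`, one has, for
`z` in the open unit disk: `|1 - φ(z)| = (1/2)|1 - λ_θ(z)| ≤ |1 - z|^θ / δ`. -/
theorem abs_one_sub_phi (θ : ℝ) (hθ : θ ∈ Set.Ioo (0 : ℝ) 1)
    (δ : ℝ) (hδ : δ = Real.cos (θ * Real.pi / 2))
    (φ : ℂ → ℂ) (hφ : ∀ z, φ z = (1 + lensMap θ z) / 2)
    (z : ℂ) (hz : ‖z‖ < 1) :
    ‖1 - φ z‖ = (1 / 2) * ‖1 - lensMap θ z‖ ∧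
      ‖1 - φ z‖ ≤ ‖1 - z‖ ^ θ / δ := by
  have heq : ‖1 - φ z‖ = (1 / 2) * ‖1 - lensMap θ z‖ := by
    rw [hφ, show 1 - (1 + lensMap θ z) / 2 = (1 - lensMap θ z) / 2 by ring, norm_div,
      Complex.norm_two]
    ring
  refine ⟨heq, ?_⟩
  have hbound := norm_one_sub_lensMap_le hθ.1.le hθ.2 hz.le
  calc ‖1 - φ z‖ = (1 / 2) * ‖1 - lensMap θ z‖ := heq
    _ ≤ (1 / 2) * (2 * ‖1 - z‖ ^ θ / Real.cos (θ * Real.pi / 2)) := by gcongr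
    _ = ‖1 - z‖ ^ θ / δ := by rw [hδ]; ring
end

section
/- Let θ ∈ (0, 1), δ = cos(θπ/2), and define w(z) = exp(−((1 + z)/(1 − z))^θ) for z in the open unit disk D (principal branch of the power; note (1 + z)/(1 − z) has positive real part on D). Then for every z ∈ D with Re z ≥ 0, one has |w(z)| ≤ exp(−δ / |1 − z|^θ). -/
/-!
Write `ζ = (1 + z) / (1 - z)`, which lies in the right half-plane. Since `|arg ζ| ≤ π / 2`, the
principal power satisfies `Re ζ^θ = |ζ|^θ cos (θ arg ζ) ≥ cos (θπ/2) |ζ|^θ`, and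
`|ζ| ≥ 1 / |1 - z|` because `|1 + z| ≥ Re (1 + z) ≥ 1` when `Re z ≥ 0`.
Finally `|exp (-ζ^θ)| = exp (-Re ζ^θ)`.
-/

open Complex

lemma Complex.one_le_norm_one_add {z : ℂ} (hz : 0 ≤ z.re) : 1 ≤ ‖1 + z‖ :=
  calc (1 : ℝ) ≤ (1 + z).re := by simpa using hz
    _ ≤ ‖1 + z‖ := re_le_norm _

lemma Complex.re_one_add_div_one_sub_pos {z : ℂ} (hz : ‖z‖ < 1) :
    0 < ((1 + z) / (1 - z)).re := by
  have h1z : 1 - z ≠ 0 := sub_ne_zero.mpr fun h ↦ by simp [← h] at hz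
  have hnormSq : z.re * z.re + z.im * z.im < 1 := by
    rw [← normSq_apply, ← Complex.sq_norm]
    nlinarith [norm_nonneg z]
  rw [div_re, ← add_div]
  refine div_pos ?_ (normSq_pos.mpr h1z)
  simp only [add_re, add_im, sub_re, sub_im, one_re, one_im]
  nlinarith

lemma Complex.cos_mul_pi_div_two_mul_norm_rpow_le_re_cpow {ζ : ℂ} (hζ : 0 ≤ ζ.re) {θ : ℝ}
    (hθ₀ : 0 ≤ θ) (hθ₁ : θ ≤ 1) :
    Real.cos (θ * Real.pi / 2) * ‖ζ‖ ^ θ ≤ (ζ ^ (θ : ℂ)).re := by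
  have harg : |arg ζ| ≤ Real.pi / 2 := abs_arg_le_pi_div_two_iff.mpr hζ
  have hcos : Real.cos (θ * Real.pi / 2) ≤ Real.cos (arg ζ * θ) := by
    rw [← Real.cos_abs (arg ζ * θ), abs_mul, abs_of_nonneg hθ₀]
    apply Real.cos_le_cos_of_nonneg_of_le_pi (by positivity) (by nlinarith [Real.pi_pos])
    nlinarith
  rw [cpow_ofReal_re, mul_comm]
  exact mul_le_mul_of_nonneg_left hcos (by positivity)

/-- For `θ ∈ (0,1)`, `δ = cos(θπ/2)` and `w(z) = exp(-((1+z)/(1-z))^θ)`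
(principal branch), one has `|w(z)| ≤ exp(-δ/|1-z|^θ)` for `z` in the open unit disk
with `Re z ≥ 0`. -/
theorem abs_w_le (θ : ℝ) (hθ : θ ∈ Set.Ioo (0 : ℝ) 1)
    (δ : ℝ) (hδ : δ = Real.cos (θ * Real.pi / 2))
    (w : ℂ → ℂ) (hw : ∀ z, w z = Complex.exp (-(((1 + z) / (1 - z)) ^ (θ : ℂ))))
    (z : ℂ) (hz : ‖z‖ < 1) (hre : 0 ≤ z.re) :
    ‖w z‖ ≤ Real.exp (-(δ / ‖1 - z‖ ^ θ)) := by
  obtain ⟨hθ₀, hθ₁⟩ := hθ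
  have hδ₀ : 0 ≤ δ := hδ ▸ Real.cos_nonneg_of_mem_Icc ⟨by nlinarith [Real.pi_pos],
    by nlinarith [Real.pi_pos]⟩
  have h1z : 0 < ‖1 - z‖ := norm_pos_iff.mpr (sub_ne_zero.mpr fun h ↦ by simp [← h] at hz)
  have hnorm : 1 / ‖1 - z‖ ≤ ‖(1 + z) / (1 - z)‖ := by
    rw [norm_div]
    gcongr
    exact one_le_norm_one_add hre
  rw [hw, norm_exp, neg_re, Real.exp_le_exp, neg_le_neg_iff]
  calc δ / ‖1 - z‖ ^ θ = δ * (1 / ‖1 - z‖) ^ θ := by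
        rw [Real.div_rpow zero_le_one h1z.le, Real.one_rpow, mul_one_div]
    _ ≤ δ * ‖(1 + z) / (1 - z)‖ ^ θ := by gcongr
    _ ≤ _ := hδ ▸ cos_mul_pi_div_two_mul_norm_rpow_le_re_cpow
        (re_one_add_div_one_sub_pos hz).le hθ₀.le hθ₁.le
end

section
/- Let m ≥ 1 and let λ₁, …, λ_m be positive real numbers. For A > 0, let N_A be the number of m-tuples (n₁, …, n_m) of non-negative integers such that λ₁ n₁ + ⋯ + λ_m n_m ≤ A. Then N_A is asymptotically equivalent to A^m / ((λ₁ λ₂ ⋯ λ_m) · m!) as A → ∞; that is, N_A · (λ₁ ⋯ λ_m) · m! / A^m → 1 as A → ∞. -/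
/-!
Splitting off the first coordinate gives `N_{m+1}(A) = ∑_{j ≤ A/λ₀} N_m(A - λ₀ j)`. The sums
`∑_j (m+1) λ₀ (A - λ₀ j)^m` are Riemann sums for `∫₀^A (m+1)(A-x)^m dx = A^{m+1}`, and the
discrete mean value bounds `(n+1) aⁿ (b-a) ≤ b^{n+1} - a^{n+1} ≤ (n+1) bⁿ (b-a)` compare them
with it. Induction on `m` thus gives `A^m ≤ N_A ∏ λ_k m! ≤ (A + ∑ λ_k)^m` for `A ≥ 0`, and
dividing by `A^m` squeezes the ratio to `1`.
-/

open Filter Finset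

section
variable {R : Type*} [CommRing R] [LinearOrder R] [IsStrictOrderedRing R] {a b : R}

lemma pow_succ_sub_pow_succ_le (n : ℕ) (ha : 0 ≤ a) (hab : a ≤ b) :
    b ^ (n + 1) - a ^ (n + 1) ≤ (n + 1) * b ^ n * (b - a) := by
  have h := abs_pow_sub_pow_le b a (n + 1)
  rw [abs_of_nonneg (sub_nonneg.2 (pow_le_pow_left₀ ha hab _)), abs_of_nonneg (sub_nonneg.2 hab),
    abs_of_nonneg ha, abs_of_nonneg (ha.trans hab), max_eq_left hab, Nat.add_sub_cancel,
    Nat.cast_succ] at h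
  exact h.trans_eq (by ring)

lemma le_pow_succ_sub_pow_succ (n : ℕ) (ha : 0 ≤ a) (hab : a ≤ b) :
    (n + 1) * a ^ n * (b - a) ≤ b ^ (n + 1) - a ^ (n + 1) := by
  have h := pow_add_mul_le_add_pow ha (by linarith : 0 ≤ 2 * a + (b - a)) (n + 1)
  rw [add_sub_cancel, Nat.add_sub_cancel, Nat.cast_succ] at h
  linarith

end

section
variable {L A : ℝ}

lemma mul_le_of_mem_range_floor (hL : 0 < L) (hA : 0 ≤ A) {j : ℕ}
    (hj : j ∈ range (⌊A / L⌋₊ + 1)) : L * j ≤ A := by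
  rw [mem_range, Nat.lt_succ_iff, Nat.le_floor_iff (div_nonneg hA hL.le), le_div_iff₀' hL] at hj
  exact hj

lemma pow_succ_le_sum_range_floor (n : ℕ) (hL : 0 < L) (hA : 0 ≤ A) :
    A ^ (n + 1) ≤ ∑ j ∈ range (⌊A / L⌋₊ + 1), (n + 1) * L * (A - L * j) ^ n := by
  set c : ℕ → ℝ := fun j => max (A - L * j) 0 ^ (n + 1)
  have hc_last : c (⌊A / L⌋₊ + 1) = 0 := by
    have := Nat.lt_floor_add_one (A / L)
    rw [div_lt_iff₀' hL] at this
    simp only [c, Nat.cast_succ]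
    rw [max_eq_right (by linarith), zero_pow n.succ_ne_zero]
  calc A ^ (n + 1) = ∑ j ∈ range (⌊A / L⌋₊ + 1), (c j - c (j + 1)) := by
        rw [sum_range_sub', hc_last]; simp [c, hA]
    _ ≤ _ := by
      gcongr with j hj
      have hb : 0 ≤ A - L * j := sub_nonneg.2 (mul_le_of_mem_range_floor hL hA hj)
      set b := A - L * j
      have ha : max (b - L) 0 ≤ b := max_le (by linarith) hb
      have hc : c j - c (j + 1) = b ^ (n + 1) - max (b - L) 0 ^ (n + 1) := by
        simp only [c, b, max_eq_left hb, Nat.cast_succ, mul_add_one, sub_sub]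
      calc c j - c (j + 1) ≤ (n + 1) * b ^ n * (b - max (b - L) 0) :=
            hc ▸ pow_succ_sub_pow_succ_le n (le_max_right _ _) ha
        _ ≤ (n + 1) * b ^ n * L := by gcongr; linarith [le_max_left (b - L) 0]
        _ = (n + 1) * L * b ^ n := by ring

lemma sum_range_floor_le_pow_succ (n : ℕ) (hL : 0 < L) (hA : 0 ≤ A) {S : ℝ} (hS : 0 ≤ S) :
    ∑ j ∈ range (⌊A / L⌋₊ + 1), (n + 1) * L * (A - L * j + S) ^ n ≤
      (A + L + S) ^ (n + 1) := by
  set d : ℕ → ℝ := fun j => (A + L + S - L * j) ^ (n + 1)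
  calc ∑ j ∈ range (⌊A / L⌋₊ + 1), (n + 1) * L * (A - L * j + S) ^ n
      ≤ ∑ j ∈ range (⌊A / L⌋₊ + 1), (d j - d (j + 1)) := by
        gcongr with j hj
        have hb : 0 ≤ A - L * j + S := by linarith [mul_le_of_mem_range_floor hL hA hj]
        set b := A - L * j + S
        have hd : d j - d (j + 1) = (b + L) ^ (n + 1) - b ^ (n + 1) := by
          simp only [d, b]; push_cast; ring
        calc (n + 1) * L * b ^ n = (n + 1) * b ^ n * ((b + L) - b) := by ring
          _ ≤ d j - d (j + 1) := hd ▸ le_pow_succ_sub_pow_succ n hb (by linarith)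
    _ = d 0 - d (⌊A / L⌋₊ + 1) := sum_range_sub' d _
    _ ≤ d 0 := by
        have := mul_le_of_mem_range_floor hL hA (self_mem_range_succ ⌊A / L⌋₊)
        simp only [sub_le_self_iff, d, Nat.cast_succ]
        exact pow_nonneg (by linarith) _
    _ = (A + L + S) ^ (n + 1) := by simp [d]

end

noncomputable def latticeCount {m : ℕ} (lam : Fin m → ℝ) (A : ℝ) : ℕ :=
  Nat.card {n : Fin m → ℕ // ∑ k, lam k * n k ≤ A}

section
variable {m : ℕ} {lam : Fin m → ℝ} {A : ℝ}

lemma le_floor_of_sum_mul_le (hlam : ∀ k, 0 < lam k) {n : Fin m → ℕ}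
    (hn : ∑ k, lam k * n k ≤ A) (k : Fin m) : n k ≤ ⌊A / lam k⌋₊ := by
  refine Nat.le_floor ((le_div_iff₀' (hlam k)).2 (le_trans ?_ hn))
  exact single_le_sum (f := fun j => lam j * (n j : ℝ))
    (fun j _ => mul_nonneg (hlam j).le (Nat.cast_nonneg _)) (mem_univ k)

lemma finite_latticePoints (hlam : ∀ k, 0 < lam k) (A : ℝ) :
    Finite {n : Fin m → ℕ // ∑ k, lam k * n k ≤ A} :=
  Set.Finite.to_subtype <| (Set.finite_Iic fun k => ⌊A / lam k⌋₊).subset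
    fun _ hn k => le_floor_of_sum_mul_le hlam hn k

end

lemma latticeCount_succ {m : ℕ} {lam : Fin (m + 1) → ℝ} (hlam : ∀ k, 0 < lam k) (A : ℝ) :
    latticeCount lam A = ∑ j ∈ range (⌊A / lam 0⌋₊ + 1),
      latticeCount (Fin.tail lam) (A - lam 0 * j) := by
  have hlam' : ∀ k, 0 < Fin.tail lam k := fun k => hlam k.succ
  have cons_mem {j : ℕ} {n' : Fin m → ℕ} :
      ∑ k, lam k * (Fin.cons j n' : Fin (m + 1) → ℕ) k ≤ A ↔
        ∑ k, Fin.tail lam k * n' k ≤ A - lam 0 * j := by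
    rw [Fin.sum_univ_succ, le_sub_iff_add_le']
    simp [Fin.tail]
  let e : {n : Fin (m + 1) → ℕ // ∑ k, lam k * n k ≤ A} ≃
      Σ j : Fin (⌊A / lam 0⌋₊ + 1),
        {n' : Fin m → ℕ // ∑ k, Fin.tail lam k * n' k ≤ A - lam 0 * (j : ℕ)} :=
    { toFun n := ⟨⟨n.1 0, Nat.lt_succ_of_le (le_floor_of_sum_mul_le hlam n.2 0)⟩,
        ⟨Fin.tail n.1, cons_mem.1 (by rw [Fin.cons_self_tail]; exact n.2)⟩⟩
      invFun p := ⟨Fin.cons p.1.1 p.2.1, cons_mem.2 p.2.2⟩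
      left_inv n := Subtype.ext (Fin.cons_self_tail n.1)
      right_inv _ := rfl }
  have := fun j => finite_latticePoints hlam' (A - lam 0 * j)
  rw [latticeCount, Nat.card_congr e, Nat.card_sigma]
  exact Fin.sum_univ_eq_sum_range (fun j => latticeCount (Fin.tail lam) (A - lam 0 * j)) _

lemma latticeCount_zero (lam : Fin 0 → ℝ) {A : ℝ} (hA : 0 ≤ A) : latticeCount lam A = 1 := by
  simp [latticeCount, hA]

lemma latticeCount_succ_mul {m : ℕ} {lam : Fin (m + 1) → ℝ} (hlam : ∀ k, 0 < lam k) (A : ℝ) :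
    (latticeCount lam A : ℝ) * (∏ k, lam k) * (m + 1).factorial =
      ∑ j ∈ range (⌊A / lam 0⌋₊ + 1), (m + 1) * lam 0 *
        (latticeCount (Fin.tail lam) (A - lam 0 * j) * (∏ k, Fin.tail lam k) * m.factorial) := by
  rw [latticeCount_succ hlam, Fin.prod_univ_succ, Nat.factorial_succ, Nat.cast_sum, sum_mul,
    sum_mul]
  refine sum_congr rfl fun j _ => ?_
  push_cast [Fin.tail]
  ring

theorem pow_le_latticeCount_mul {m : ℕ} {lam : Fin m → ℝ} (hlam : ∀ k, 0 < lam k) {A : ℝ}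
    (hA : 0 ≤ A) : A ^ m ≤ latticeCount lam A * (∏ k, lam k) * m.factorial := by
  induction m generalizing A with
  | zero => simp [latticeCount_zero lam hA]
  | succ m ih =>
    have hL := hlam 0
    rw [latticeCount_succ_mul hlam A]
    refine (pow_succ_le_sum_range_floor m hL hA).trans (sum_le_sum fun j hj => ?_)
    gcongr
    exact ih (fun k => hlam k.succ) (sub_nonneg.2 (mul_le_of_mem_range_floor hL hA hj))

theorem latticeCount_mul_le {m : ℕ} {lam : Fin m → ℝ} (hlam : ∀ k, 0 < lam k) {A : ℝ}
    (hA : 0 ≤ A) : latticeCount lam A * (∏ k, lam k) * m.factorial ≤ (A + ∑ k, lam k) ^ m := by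
  induction m generalizing A with
  | zero => simp [latticeCount_zero lam hA]
  | succ m ih =>
    have hL := hlam 0
    rw [latticeCount_succ_mul hlam A, Fin.sum_univ_succ, ← add_assoc]
    refine (sum_le_sum fun j hj => ?_).trans
      (sum_range_floor_le_pow_succ m hL hA (sum_nonneg fun k _ => (hlam k.succ).le))
    gcongr
    exact ih (fun k => hlam k.succ) (sub_nonneg.2 (mul_le_of_mem_range_floor hL hA hj))

theorem lattice_point_count_asymptotic_general (m : ℕ)
    (lam : Fin m → ℝ) (hlam : ∀ k, 0 < lam k) :
    Tendsto (fun A : ℝ =>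
        (Nat.card {n : Fin m → ℕ // (∑ k, lam k * n k) ≤ A} : ℝ) *
          (∏ k, lam k) * (Nat.factorial m) / A ^ m)
      atTop (nhds 1) := by
  set S := ∑ k, lam k
  have h_upper : Tendsto (fun A : ℝ => (1 + S / A) ^ m) atTop (nhds 1) := by
    simpa using ((tendsto_const_nhds.div_atTop tendsto_id).const_add (1 : ℝ)).pow m
  refine tendsto_of_tendsto_of_tendsto_of_le_of_le' tendsto_const_nhds h_upper ?_ ?_ <;>
    filter_upwards [eventually_gt_atTop 0] with A hA
  · rw [le_div_iff₀ (by positivity), one_mul]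
    exact pow_le_latticeCount_mul hlam hA.le
  · rw [div_le_iff₀ (by positivity), ← mul_pow, add_mul, div_mul_cancel₀ _ hA.ne', one_mul]
    exact latticeCount_mul_le hlam hA.le

/-- For positive reals `λ₁, …, λ_m`, the number `N_A` of `m`-tuples of
non-negative integers with `Σ λ_k n_k ≤ A` satisfies
`N_A ∼ A^m / ((λ₁⋯λ_m) m!)` as `A → ∞`. -/
theorem lattice_point_count_asymptotic (m : ℕ) (hm : 1 ≤ m)
    (lam : Fin m → ℝ) (hlam : ∀ k, 0 < lam k) :
    Tendsto (fun A : ℝ =>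
        (Nat.card {n : Fin m → ℕ // (∑ k, lam k * n k) ≤ A} : ℝ) *
          (∏ k, lam k) * (Nat.factorial m) / A ^ m)
      atTop (nhds 1) :=
  lattice_point_count_asymptotic_general m lam hlam
end

section
/- Let m ≥ 1. There is a constant M_m > 0, depending only on m, with the following property: for every family (b_α) of complex numbers indexed by multi-indices α ∈ ℕ^m with Σ_α |b_α|² ≤ 1, every integer l ≥ 1, and every z ∈ D^m (the open unit polydisk), the tail of the power series satisfies |Σ_{|α| > l} b_α z^α| ≤ M_m · l^{m/2} · |z|_∞^l / (1 − |z|_∞²)^{(m+1)/2}, where |z|_∞ = max_{1 ≤ j ≤ m} |z_j| and |α| = α₁ + ⋯ + α_m. -/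
/-!
By Cauchy–Schwarz the tail is at most `(∑_{|α| > l} s ^ |α|) ^ (1/2)` with `s = r ^ 2`,
`r = |z|_∞`. Put `u = 1 - (1 - s) / (2 l)`, so that `s ≤ u` and, by Bernoulli, `u ^ l ≥ 1/2`.
Then `s ^ |α| ≤ 2 s ^ l u ^ |α|` whenever `|α| ≥ l`, and summing over all multi-indices gives
`∑_α u ^ |α| = (1 - u)⁻¹ ^ m = (2 l / (1 - s)) ^ m`.
-/

open Finset

theorem hasSum_pow_sum_fin (m : ℕ) {u : ℝ} (hu0 : 0 ≤ u) (hu1 : u < 1) :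
    HasSum (fun α : Fin m → ℕ => u ^ ∑ i, α i) ((1 - u)⁻¹ ^ m) := by
  induction m with
  | zero => simp
  | succ n ih =>
    have hgeom : HasSum (fun k : ℕ => u ^ k) (1 - u)⁻¹ := hasSum_geometric_of_lt_one hu0 hu1
    have hsum : Summable fun p : ℕ × (Fin n → ℕ) => u ^ p.1 * u ^ ∑ i, p.2 i :=
      hgeom.summable.mul_of_nonneg (g := fun α : Fin n → ℕ => u ^ ∑ i, α i) ih.summable
        (fun k => pow_nonneg hu0 k) (fun α => pow_nonneg hu0 _)
    rw [← (Fin.consEquiv fun _ => ℕ).hasSum_iff, pow_succ']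
    refine (hgeom.mul ih hsum).congr_fun fun p => ?_
    simp [Fin.consEquiv, Fin.sum_cons, pow_add]

theorem pow_mul_pow_le_pow_mul_pow {s u : ℝ} (hs : 0 ≤ s) (hsu : s ≤ u) {k l : ℕ}
    (hlk : l ≤ k) : s ^ k * u ^ l ≤ s ^ l * u ^ k := by
  obtain ⟨j, rfl⟩ := Nat.exists_eq_add_of_le hlk
  have hu : 0 ≤ u := hs.trans hsu
  calc s ^ (l + j) * u ^ l = s ^ l * (s ^ j * u ^ l) := by ring
    _ ≤ s ^ l * (u ^ j * u ^ l) := by gcongr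
    _ = s ^ l * u ^ (l + j) := by ring

theorem half_le_one_sub_div_pow {c : ℝ} (hc : c ≤ 1) {l : ℕ} (hl : 0 < l) :
    1 / 2 ≤ (1 - c / (2 * l)) ^ l := by
  have hl' : (1 : ℝ) ≤ l := by exact_mod_cast hl
  have hcl : c / (2 * l) ≤ 1 := by rw [div_le_one (by positivity)]; linarith
  have hbernoulli := one_add_mul_le_pow (a := -(c / (2 * l))) (by linarith) l
  have hlc : (l : ℝ) * -(c / (2 * l)) = -(c / 2) := by field_simp
  rw [hlc, ← sub_eq_add_neg, ← sub_eq_add_neg] at hbernoulli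
  linarith

theorem tsum_tail_pow_sum_le (m : ℕ) {l : ℕ} (hl : 0 < l) {s : ℝ} (hs0 : 0 ≤ s) (hs1 : s < 1) :
    ∑' α : {a : Fin m → ℕ // l < ∑ i, a i}, s ^ ∑ i, (α : Fin m → ℕ) i
      ≤ 2 * 2 ^ m * l ^ m * s ^ l / (1 - s) ^ m := by
  have hl' : (1 : ℝ) ≤ l := by exact_mod_cast hl
  set u := 1 - (1 - s) / (2 * l) with hu
  have hsu : s ≤ u := by
    have : (1 - s) / (2 * l) ≤ 1 - s := div_le_self (by linarith) (by linarith)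
    linarith
  have hu0 : 0 ≤ u := hs0.trans hsu
  have hu1 : u < 1 := by
    have : 0 < (1 - s) / (2 * l) := by positivity
    linarith
  have hul : 1 / 2 ≤ u ^ l := half_le_one_sub_div_pow (by linarith) hl
  have hU := hasSum_pow_sum_fin m hu0 hu1
  have hpointwise (α : {a : Fin m → ℕ // l < ∑ i, a i}) :
      s ^ ∑ i, (α : Fin m → ℕ) i ≤ 2 * s ^ l * u ^ ∑ i, (α : Fin m → ℕ) i := by
    have := pow_mul_pow_le_pow_mul_pow hs0 hsu α.2.le
    nlinarith [pow_nonneg hs0 (∑ i, (α : Fin m → ℕ) i)]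
  calc ∑' α : {a : Fin m → ℕ // l < ∑ i, a i}, s ^ ∑ i, (α : Fin m → ℕ) i
      ≤ ∑' α : {a : Fin m → ℕ // l < ∑ i, a i}, 2 * s ^ l * u ^ ∑ i, (α : Fin m → ℕ) i :=
        Summable.tsum_le_tsum hpointwise ((hasSum_pow_sum_fin m hs0 hs1).summable.subtype _)
          ((hU.summable.subtype _).mul_left _)
    _ = 2 * s ^ l * ∑' α : {a : Fin m → ℕ // l < ∑ i, a i}, u ^ ∑ i, (α : Fin m → ℕ) i :=
        tsum_mul_left
    _ ≤ 2 * s ^ l * (1 - u)⁻¹ ^ m := by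
        gcongr
        exact hU.tsum_eq ▸ hU.summable.tsum_subtype_le _ _ fun _ => pow_nonneg hu0 _
    _ = 2 * 2 ^ m * l ^ m * s ^ l / (1 - s) ^ m := by
        rw [hu, sub_sub_cancel, inv_div, div_pow, mul_pow]
        ring

theorem Real.sqrt_pow_eq_rpow {x : ℝ} (hx : 0 ≤ x) (n : ℕ) : √(x ^ n) = x ^ ((n : ℝ) / 2) := by
  rw [Real.sqrt_eq_rpow, ← Real.rpow_natCast, ← Real.rpow_mul hx, mul_one_div]

theorem sqrt_tsum_tail_sq_pow_sum_le (m : ℕ) {l : ℕ} (hl : 0 < l) {r : ℝ} (hr0 : 0 ≤ r)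
    (hr1 : r < 1) :
    √(∑' α : {a : Fin m → ℕ // l < ∑ i, a i}, (r ^ 2) ^ ∑ i, (α : Fin m → ℕ) i)
      ≤ √(2 * 2 ^ m) * (l : ℝ) ^ ((m : ℝ) / 2) * r ^ l / (1 - r ^ 2) ^ (((m : ℝ) + 1) / 2) := by
  have hs1 : r ^ 2 < 1 := by nlinarith
  have hs1' : 0 < 1 - r ^ 2 := sub_pos.mpr hs1
  have hsqrt : √((r ^ 2) ^ l) = r ^ l := by
    rw [← pow_mul, mul_comm, pow_mul, Real.sqrt_sq (by positivity)]
  calc _ ≤ √(2 * 2 ^ m * l ^ m * (r ^ 2) ^ l / (1 - r ^ 2) ^ m) :=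
        Real.sqrt_le_sqrt (tsum_tail_pow_sum_le m hl (sq_nonneg r) hs1)
    _ = √(2 * 2 ^ m) * (l : ℝ) ^ ((m : ℝ) / 2) * r ^ l / (1 - r ^ 2) ^ ((m : ℝ) / 2) := by
        rw [Real.sqrt_div' _ (pow_nonneg hs1'.le m), Real.sqrt_mul (by positivity),
          Real.sqrt_mul (by positivity), hsqrt, Real.sqrt_pow_eq_rpow (Nat.cast_nonneg l),
          Real.sqrt_pow_eq_rpow hs1'.le]
    _ ≤ _ := by
        refine div_le_div_of_nonneg_left (by positivity) (Real.rpow_pos_of_pos hs1' _)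
          (Real.rpow_le_rpow_of_exponent_ge hs1' (sub_le_self _ (sq_nonneg r)) ?_)
        linarith

theorem norm_prod_pow_le_pow_sum {ι 𝕜 : Type*} [Fintype ι] [NormedField 𝕜] {z : ι → 𝕜} {r : ℝ}
    (hz : ∀ i, ‖z i‖ ≤ r) (α : ι → ℕ) : ‖∏ i, z i ^ α i‖ ≤ r ^ ∑ i, α i := by
  rw [norm_prod, ← prod_pow_eq_pow_sum]
  exact prod_le_prod (fun i _ => by positivity) fun i _ => by
    rw [norm_pow]; exact pow_le_pow_left₀ (norm_nonneg _) (hz i) _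

theorem norm_tsum_mul_le_sqrt_mul_sqrt {ι 𝕜 : Type*} [NormedField 𝕜] {b w : ι → 𝕜}
    (hb : Summable fun i => ‖b i‖ ^ 2) (hw : Summable fun i => ‖w i‖ ^ 2) :
    ‖∑' i, b i * w i‖ ≤ √(∑' i, ‖b i‖ ^ 2) * √(∑' i, ‖w i‖ ^ 2) := by
  have hb' : Summable fun i => ‖b i‖ ^ (2 : ℝ) := by simpa [Real.rpow_two] using hb
  have hw' : Summable fun i => ‖w i‖ ^ (2 : ℝ) := by simpa [Real.rpow_two] using hw
  have hcs := Real.inner_le_Lp_mul_Lq_tsum_of_nonneg .two_two (fun i => norm_nonneg (b i))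
    (fun i => norm_nonneg (w i)) hb' hw'
  have hsum := Real.summable_mul_of_Lp_Lq_of_nonneg .two_two (fun i => norm_nonneg (b i))
    (fun i => norm_nonneg (w i)) hb' hw'
  simp only [Real.rpow_two, ← Real.sqrt_eq_rpow] at hcs
  refine (norm_tsum_le_tsum_norm ?_).trans ?_ <;> simpa only [norm_mul]

theorem Real.iSup_lt_of_forall_lt {ι : Type*} [Finite ι] {f : ι → ℝ} {a : ℝ} (ha : 0 < a)
    (h : ∀ i, f i < a) : ⨆ i, f i < a := by
  rcases isEmpty_or_nonempty ι with _ | _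
  · rwa [Real.iSup_of_isEmpty]
  · obtain ⟨i, hi⟩ := Finite.exists_max f
    exact (ciSup_le hi).trans_lt (h i)

theorem polydisk_tail_estimate_general (m : ℕ) :
    ∃ M : ℝ, 0 < M ∧
      ∀ b : (Fin m → ℕ) → ℂ,
        Summable (fun α : Fin m → ℕ => ‖b α‖ ^ 2) →
        (∑' α : Fin m → ℕ, ‖b α‖ ^ 2) ≤ 1 →
        ∀ l : ℕ, 1 ≤ l →
        ∀ z : Fin m → ℂ, (∀ i, ‖z i‖ < 1) →
          ‖(∑' α : {a : Fin m → ℕ // l < ∑ i, a i},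
              b α * ∏ i, z i ^ (α : Fin m → ℕ) i)‖ ≤
            M * (l : ℝ) ^ ((m : ℝ) / 2) * (⨆ i, ‖z i‖) ^ l /
              (1 - (⨆ i, ‖z i‖) ^ 2) ^ (((m : ℝ) + 1) / 2) := by
  refine ⟨√(2 * 2 ^ m), by positivity, fun b hb hb1 l hl z hz => ?_⟩
  set r := ⨆ i, ‖z i‖
  have hzr (i : Fin m) : ‖z i‖ ≤ r := le_ciSup (Finite.bddAbove_range fun i => ‖z i‖) i
  have hr0 : 0 ≤ r := Real.iSup_nonneg fun i => norm_nonneg (z i)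
  have hr1 : r < 1 := Real.iSup_lt_of_forall_lt one_pos hz
  have hmonomial (α : {a : Fin m → ℕ // l < ∑ i, a i}) :
      ‖∏ i, z i ^ (α : Fin m → ℕ) i‖ ^ 2 ≤ (r ^ 2) ^ ∑ i, (α : Fin m → ℕ) i := by
    rw [← pow_mul, mul_comm, pow_mul]
    exact pow_le_pow_left₀ (norm_nonneg _) (norm_prod_pow_le_pow_sum hzr _) 2
  have hgeom := (hasSum_pow_sum_fin m (sq_nonneg r) (by nlinarith)).summable.subtype
    {a : Fin m → ℕ | l < ∑ i, a i}
  have hw := hgeom.of_nonneg_of_le (fun _ => sq_nonneg _) hmonomial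
  have hb1' : ∑' α : {a : Fin m → ℕ // l < ∑ i, a i}, ‖b α‖ ^ 2 ≤ 1 :=
    (hb.tsum_subtype_le _ _ fun _ => sq_nonneg _).trans hb1
  calc _ ≤ √(∑' α : {a : Fin m → ℕ // l < ∑ i, a i}, ‖b α‖ ^ 2) *
          √(∑' α : {a : Fin m → ℕ // l < ∑ i, a i}, ‖∏ i, z i ^ (α : Fin m → ℕ) i‖ ^ 2) :=
        norm_tsum_mul_le_sqrt_mul_sqrt (hb.subtype _) hw
    _ ≤ 1 * √(∑' α : {a : Fin m → ℕ // l < ∑ i, a i}, (r ^ 2) ^ ∑ i, (α : Fin m → ℕ) i) :=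
        mul_le_mul (Real.sqrt_le_one.mpr hb1') (Real.sqrt_le_sqrt (hw.tsum_le_tsum hmonomial hgeom))
          (Real.sqrt_nonneg _) zero_le_one
    _ ≤ _ := (one_mul _).trans_le (sqrt_tsum_tail_sq_pow_sum_le m hl hr0 hr1)

/-- For every `m ≥ 1` there is `M_m > 0` such that for every family
`(b_α)_{α ∈ ℕ^m}` with `Σ_α |b_α|² ≤ 1`, every `l ≥ 1` and every `z` in the open
unit polydisk, the tail `Σ_{|α| > l} b_α z^α` satisfies
`|Σ_{|α| > l} b_α z^α| ≤ M_m l^{m/2} r^l / (1 - r²)^{(m+1)/2}` where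
`r = |z|_∞ = max_j |z_j|`. -/
theorem polydisk_tail_estimate (m : ℕ) (hm : 1 ≤ m) :
    ∃ M : ℝ, 0 < M ∧
      ∀ b : (Fin m → ℕ) → ℂ,
        Summable (fun α : Fin m → ℕ => ‖b α‖ ^ 2) →
        (∑' α : Fin m → ℕ, ‖b α‖ ^ 2) ≤ 1 →
        ∀ l : ℕ, 1 ≤ l →
        ∀ z : Fin m → ℂ, (∀ i, ‖z i‖ < 1) →
          ‖(∑' α : {a : Fin m → ℕ // l < ∑ i, a i},
              b α * ∏ i, z i ^ (α : Fin m → ℕ) i)‖ ≤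
            M * (l : ℝ) ^ ((m : ℝ) / 2) * (⨆ i, ‖z i‖) ^ l /
              (1 - (⨆ i, ‖z i‖) ^ 2) ^ (((m : ℝ) + 1) / 2) :=
  polydisk_tail_estimate_general m
end
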